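/- Let G be a group with a left-invariant partial order < admitting a left-invariant simply connected extension (∼_u, ∼_l), and let H be a completely convex normal subgroup of G. Equip G/H with the induced left-invariant partial order <' and left-invariant simply connected extension (∼_u', ∼_l'), and form between-sets B in G/H using these relations. If g, f, k ∈ G and gH ∈ B_{fH,kH} (computed in G/H), then there exist h, h' ∈ H such that gh' ∈ B_{f,kh} (computed in G). -/

import Mathlib

open Pointwise

namespace PaperSC

variable {S : Type*}

/-- Exactly one of four propositions holds. -/
def ExactlyOne4 (p q r s : Prop) : Prop :=
  (p ∨ q ∨ r ∨ s) ∧ (p → ¬q ∧ ¬r ∧ ¬s) ∧ (q → ¬r ∧ ¬s) ∧ (r → ¬s)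

/-- `x` and `y` are incomparable with respect to the strict order `lt`. -/
def Incomp (lt : S → S → Prop) (x y : S) : Prop :=
  x ≠ y ∧ ¬ lt x y ∧ ¬ lt y x

/-- The reflexive closure of `lt`. -/
def Le' (lt : S → S → Prop) (x y : S) : Prop := x = y ∨ lt x y

/-- `x ∼ᵤ y` : `x` and `y` are incomparable and have a common upper bound. -/
def SimU (lt : S → S → Prop) (x y : S) : Prop :=
  Incomp lt x y ∧ ∃ z, Le' lt x z ∧ Le' lt y z

/-- `x ∼ₗ y` : `x` and `y` are incomparable and have a common lower bound. -/
def SimL (lt : S → S → Prop) (x y : S) : Prop :=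
  Incomp lt x y ∧ ∃ z, Le' lt z x ∧ Le' lt z y

/-- Every incomparable pair has a common upper bound or a common lower bound. -/
def StronglyConnectedRel (lt : S → S → Prop) : Prop :=
  ∀ x y, Incomp lt x y → SimU lt x y ∨ SimL lt x y

/-- Acyclicity: `x ∼ᵤ y` and `x ∼ₗ z` imply `y < z`. -/
def AcyclicRel (lt : S → S → Prop) : Prop :=
  ∀ x y z, SimU lt x y → SimL lt x z → lt y z

/-- `(u, l)` is a simply connected extension of the strict partial order `lt`. -/
structure IsSCExt (lt u l : S → S → Prop) : Prop where
  u_symm : ∀ x y, u x y → u y x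
  l_symm : ∀ x y, l x y → l y x
  exactly_one : ∀ x y, x ≠ y → ExactlyOne4 (lt x y) (lt y x) (u x y) (l x y)
  u_of_ub : ∀ x y, Incomp lt x y → (∃ z, Le' lt x z ∧ Le' lt y z) → u x y
  l_of_lb : ∀ x y, Incomp lt x y → (∃ z, Le' lt z x ∧ Le' lt z y) → l x y
  acyclic : ∀ x y z, u x y → l x z → lt y z

/-- `b` is between `a` and `c` (with respect to `lt` and the extension `(u, l)`). -/
def Btwn (lt u l : S → S → Prop) (a c b : S) : Prop :=
  (lt a c ∧ ((lt a b ∧ lt b c) ∨ (u a b ∧ l b c))) ∨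
  (lt c a ∧ ((lt c b ∧ lt b a) ∨ (u c b ∧ l b a))) ∨
  (l a c ∧ ((l a b ∧ lt b c) ∨ (l c b ∧ lt b a))) ∨
  (u a c ∧ ((u a b ∧ lt c b) ∨ (u c b ∧ lt a b)))

/-- The between set `B_{a,b}`; it equals `{a}` when `a = b`. -/
def BSet (lt u l : S → S → Prop) (a b : S) : Set S :=
  {a, b} ∪ {x | a ≠ b ∧ Btwn lt u l a b x}

/-- The set `A` is totally ordered by `lt`. -/
def IsChainRel (lt : S → S → Prop) (A : Set S) : Prop :=
  ∀ p ∈ A, ∀ q ∈ A, p = q ∨ lt p q ∨ lt q p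

/-- `x O y` iff `B_{x,y}` is totally ordered by `lt`. -/
def ORel (lt u l : S → S → Prop) (x y : S) : Prop :=
  IsChainRel lt (BSet lt u l x y)

/-- The extension is rectifiable: every between set is a finite union of `O`-classes. -/
def Rectifiable (lt u l : S → S → Prop) : Prop :=
  ∀ a b : S, a ≠ b → ∃ F : Finset S,
    (↑F : Set S) ⊆ BSet lt u l a b ∧
    ∀ x ∈ BSet lt u l a b, ∃ c ∈ F, ORel lt u l x c

/-- A relation on a group is left-invariant. -/
def LeftInvariant {G : Type*} [Group G] (r : G → G → Prop) : Prop :=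
  ∀ f g h : G, r g h → r (f * g) (f * h)

/-- A subgroup `H` is completely convex: between sets of elements of `H` lie in `H`. -/
def CompletelyConvex {G : Type*} [Group G] (lt u l : G → G → Prop) (H : Subgroup G) : Prop :=
  ∀ h1 ∈ H, ∀ h2 ∈ H, BSet lt u l h1 h2 ⊆ (H : Set G)

/-- The relation induced on the quotient `G ⧸ H` by a relation `r` on `G`:
`g₁H r' g₂H` iff the cosets are distinct and `r g₁ (g₂ h)` for some `h ∈ H`. -/
def QRel {G : Type*} [Group G] (r : G → G → Prop) (H : Subgroup G) (x y : G ⧸ H) : Prop :=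
  x ≠ y ∧ ∃ g1 g2 : G, (g1 : G ⧸ H) = x ∧ (g2 : G ⧸ H) = y ∧ ∃ h ∈ H, r g1 (g2 * h)

/-!
A relation between two cosets of the normal subgroup `H` lifts to `G` with the representative of
either coset chosen freely: translating on the left by an element of `H` moves one representative
and, by normality, keeps the other one in its coset. Fixing `g` as the representative of the middle
coset, both relations witnessing `gH ∈ B_{fH,kH}` lift to `G`, and the relation between the lifted
endpoints follows from transitivity and acyclicity. A final left translation by an element of `H`
brings the representative of `fH` back to `f`.
-/

section

variable {S : Type*} {lt u l : S → S → Prop}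

lemma IsSCExt.not_lt_of_l (hs : IsSCExt lt u l) {x y : S} (hxy : x ≠ y) (h : l x y) :
    ¬ lt x y ∧ ¬ lt y x ∧ ¬ u x y := by
  obtain ⟨-, h1, h2, h3⟩ := hs.exactly_one x y hxy
  exact ⟨fun h' => (h1 h').2.2 h, fun h' => (h2 h').2 h, fun h' => h3 h' h⟩

lemma IsSCExt.not_lt_of_u (hs : IsSCExt lt u l) {x y : S} (hxy : x ≠ y) (h : u x y) :
    ¬ lt x y ∧ ¬ lt y x ∧ ¬ l x y := by
  obtain ⟨-, h1, h2, h3⟩ := hs.exactly_one x y hxy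
  exact ⟨fun h' => (h1 h').2.1 h, fun h' => (h2 h').1 h, h3 h⟩

lemma IsSCExt.lt_of_u_of_l (hs : IsSCExt lt u l) {a b c : S} (hab : u a b) (hbc : l b c) :
    lt a c :=
  hs.acyclic b a c (hs.u_symm a b hab) hbc

lemma IsSCExt.l_of_l_of_lt (hs : IsSCExt lt u l) (hirr : ∀ x, ¬ lt x x)
    (htrans : ∀ x y z, lt x y → lt y z → lt x z) {a b c : S} (hab : a ≠ b) (h1 : l a b)
    (h2 : lt b c) : l a c := by
  obtain ⟨hnab, hnba, hnu⟩ := hs.not_lt_of_l hab h1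
  have hac : a ≠ c := by
    rintro rfl
    exact hnba h2
  rcases (hs.exactly_one a c hac).1 with h | h | h | h
  · exact absurd (hs.u_of_ub a b ⟨hab, hnab, hnba⟩ ⟨c, .inr h, .inr h2⟩) hnu
  · exact absurd (htrans _ _ _ h2 h) hnba
  · exact absurd (htrans _ _ _ h2 (hs.acyclic a c b h h1)) (hirr b)
  · exact h

lemma IsSCExt.u_of_u_of_lt (hs : IsSCExt lt u l) (hirr : ∀ x, ¬ lt x x)
    (htrans : ∀ x y z, lt x y → lt y z → lt x z) {a b c : S} (hab : a ≠ b) (h1 : u a b)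
    (h2 : lt c b) : u a c := by
  obtain ⟨hnab, hnba, hnl⟩ := hs.not_lt_of_u hab h1
  have hac : a ≠ c := by
    rintro rfl
    exact hnab h2
  rcases (hs.exactly_one a c hac).1 with h | h | h | h
  · exact absurd (htrans _ _ _ h h2) hnab
  · exact absurd (hs.l_of_lb a b ⟨hab, hnab, hnba⟩ ⟨c, .inr h, .inr h2⟩) hnl
  · exact h
  · exact absurd (htrans _ _ _ (hs.acyclic a b c h1 h) h2) (hirr b)

lemma Btwn.mono {lt' u' l' : S → S → Prop} (hlt : ∀ x y, lt x y → lt' x y)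
    (hu : ∀ x y, u x y → u' x y) (hl : ∀ x y, l x y → l' x y) {a c b : S}
    (h : Btwn lt u l a c b) : Btwn lt' u' l' a c b := by
  unfold Btwn at *
  aesop

end

section

variable {G : Type*} [Group G] {H : Subgroup G} [H.Normal] {r lt u l : G → G → Prop}

lemma mk_mul_of_mem_left {x : G} (y : G) (hx : x ∈ H) : ((x * y : G) : G ⧸ H) = y :=
  QuotientGroup.eq_iff_div_mem.mpr (by rwa [mul_div_cancel_right])

lemma LeftInvariant.exists_rel_of_mk_eq_left (hr : LeftInvariant r) {a b a' : G} (hab : r a b)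
    (ha : (a' : G ⧸ H) = a) : ∃ b' : G, (b' : G ⧸ H) = b ∧ r a' b' := by
  have hx : a' / a ∈ H := QuotientGroup.eq_iff_div_mem.mp ha
  exact ⟨a' / a * b, mk_mul_of_mem_left b hx, by simpa using hr (a' / a) a b hab⟩

lemma LeftInvariant.exists_rel_of_mk_eq_right (hr : LeftInvariant r) {a b b' : G} (hab : r a b)
    (hb : (b' : G ⧸ H) = b) : ∃ a' : G, (a' : G ⧸ H) = a ∧ r a' b' := by
  have hx : b' / b ∈ H := QuotientGroup.eq_iff_div_mem.mp hb
  exact ⟨b' / b * a, mk_mul_of_mem_left a hx, by simpa using hr (b' / b) a b hab⟩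

lemma QRel.exists_rel_right (hr : LeftInvariant r) {X Y : G ⧸ H} (h : QRel r H X Y) {x : G}
    (hx : (x : G ⧸ H) = X) : ∃ y : G, (y : G ⧸ H) = Y ∧ r x y := by
  obtain ⟨-, a, b, rfl, rfl, c, hc, hab⟩ := h
  obtain ⟨y, hy, hxy⟩ := hr.exists_rel_of_mk_eq_left hab hx
  exact ⟨y, hy.trans (QuotientGroup.mk_mul_of_mem b hc), hxy⟩

lemma QRel.exists_rel_left (hr : LeftInvariant r) {X Y : G ⧸ H} (h : QRel r H X Y) {y : G}
    (hy : (y : G ⧸ H) = Y) : ∃ x : G, (x : G ⧸ H) = X ∧ r x y := by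
  obtain ⟨-, a, b, rfl, rfl, c, hc, hab⟩ := h
  exact hr.exists_rel_of_mk_eq_right hab (hy.trans (QuotientGroup.mk_mul_of_mem b hc).symm)

lemma mem_bSet_mul_left (hlt : LeftInvariant lt) (hu : LeftInvariant u) (hl : LeftInvariant l)
    (x : G) {a c b : G} (h : b ∈ BSet lt u l a c) : x * b ∈ BSet lt u l (x * a) (x * c) := by
  rcases h with (rfl | rfl) | ⟨hac, hb⟩
  · exact .inl (.inl rfl)
  · exact .inl (.inr rfl)
  · exact .inr ⟨fun h => hac (mul_left_cancel h), hb.mono (hlt x) (hu x) (hl x)⟩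

lemma exists_mem_bSet_of_mk_eq (hlt : LeftInvariant lt) (hu : LeftInvariant u)
    (hl : LeftInvariant l) {f k g f' k' g' : G} (hf : (f' : G ⧸ H) = f) (hk : (k' : G ⧸ H) = k)
    (hg : (g' : G ⧸ H) = g) (hmem : g' ∈ BSet lt u l f' k') :
    ∃ h ∈ H, ∃ h' ∈ H, g * h' ∈ BSet lt u l f (k * h) := by
  have hx : f / f' ∈ H := QuotientGroup.eq_iff_div_mem.mp hf.symm
  have hmem' := mem_bSet_mul_left hlt hu hl (f / f') hmem
  refine ⟨k⁻¹ * (f / f' * k'), ?_, g⁻¹ * (f / f' * g'), ?_, ?_⟩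
  · exact QuotientGroup.eq.mp ((mk_mul_of_mem_left k' hx).trans hk).symm
  · exact QuotientGroup.eq.mp ((mk_mul_of_mem_left g' hx).trans hg).symm
  · simpa using hmem'

lemma exists_btwn_of_btwn_quotient (hirr : ∀ x, ¬ lt x x)
    (htrans : ∀ x y z, lt x y → lt y z → lt x z) (hlt : LeftInvariant lt) (hu : LeftInvariant u)
    (hl : LeftInvariant l) (hs : IsSCExt lt u l) {f k g : G}
    (h : Btwn (QRel lt H) (QRel u H) (QRel l H) f k g) :
    ∃ f' k' : G, (f' : G ⧸ H) = f ∧ (k' : G ⧸ H) = k ∧ Btwn lt u l f' k' g := by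
  rcases h with ⟨-, ⟨hfg, hgk⟩ | ⟨hfg, hgk⟩⟩ | ⟨-, ⟨hkg, hgf⟩ | ⟨hkg, hgf⟩⟩ |
      ⟨-, ⟨hfg, hgk⟩ | ⟨hkg, hgf⟩⟩ | ⟨-, ⟨hfg, hkg⟩ | ⟨hkg, hfg⟩⟩
  · obtain ⟨f', hf', hfg'⟩ := hfg.exists_rel_left hlt rfl
    obtain ⟨k', hk', hgk'⟩ := hgk.exists_rel_right hlt rfl
    exact ⟨f', k', hf', hk', .inl ⟨htrans _ _ _ hfg' hgk', .inl ⟨hfg', hgk'⟩⟩⟩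
  · obtain ⟨f', hf', hfg'⟩ := hfg.exists_rel_left hu rfl
    obtain ⟨k', hk', hgk'⟩ := hgk.exists_rel_right hl rfl
    exact ⟨f', k', hf', hk', .inl ⟨hs.lt_of_u_of_l hfg' hgk', .inr ⟨hfg', hgk'⟩⟩⟩
  · obtain ⟨k', hk', hkg'⟩ := hkg.exists_rel_left hlt rfl
    obtain ⟨f', hf', hgf'⟩ := hgf.exists_rel_right hlt rfl
    exact ⟨f', k', hf', hk', .inr (.inl ⟨htrans _ _ _ hkg' hgf', .inl ⟨hkg', hgf'⟩⟩)⟩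
  · obtain ⟨k', hk', hkg'⟩ := hkg.exists_rel_left hu rfl
    obtain ⟨f', hf', hgf'⟩ := hgf.exists_rel_right hl rfl
    exact ⟨f', k', hf', hk', .inr (.inl ⟨hs.lt_of_u_of_l hkg' hgf', .inr ⟨hkg', hgf'⟩⟩)⟩
  · obtain ⟨f', hf', hfg'⟩ := hfg.exists_rel_left hl rfl
    obtain ⟨k', hk', hgk'⟩ := hgk.exists_rel_right hlt rfl
    have hfk' := hs.l_of_l_of_lt hirr htrans (ne_of_apply_ne _ (hf'.trans_ne hfg.1)) hfg' hgk'
    exact ⟨f', k', hf', hk', .inr (.inr (.inl ⟨hfk', .inl ⟨hfg', hgk'⟩⟩))⟩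
  · obtain ⟨k', hk', hkg'⟩ := hkg.exists_rel_left hl rfl
    obtain ⟨f', hf', hgf'⟩ := hgf.exists_rel_right hlt rfl
    have hkf' := hs.l_of_l_of_lt hirr htrans (ne_of_apply_ne _ (hk'.trans_ne hkg.1)) hkg' hgf'
    exact ⟨f', k', hf', hk', .inr (.inr (.inl ⟨hs.l_symm _ _ hkf', .inr ⟨hkg', hgf'⟩⟩))⟩
  · obtain ⟨f', hf', hfg'⟩ := hfg.exists_rel_left hu rfl
    obtain ⟨k', hk', hkg'⟩ := hkg.exists_rel_left hlt rfl
    have hfk' := hs.u_of_u_of_lt hirr htrans (ne_of_apply_ne _ (hf'.trans_ne hfg.1)) hfg' hkg'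
    exact ⟨f', k', hf', hk', .inr (.inr (.inr ⟨hfk', .inl ⟨hfg', hkg'⟩⟩))⟩
  · obtain ⟨k', hk', hkg'⟩ := hkg.exists_rel_left hu rfl
    obtain ⟨f', hf', hfg'⟩ := hfg.exists_rel_left hlt rfl
    have hkf' := hs.u_of_u_of_lt hirr htrans (ne_of_apply_ne _ (hk'.trans_ne hkg.1)) hkg' hfg'
    exact ⟨f', k', hf', hk', .inr (.inr (.inr ⟨hs.u_symm _ _ hkf', .inr ⟨hkg', hfg'⟩⟩))⟩

end

theorem stmt13_general {G : Type*} [Group G] (lt u l : G → G → Prop)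
    (hirr : ∀ x : G, ¬ lt x x)
    (htrans : ∀ x y z : G, lt x y → lt y z → lt x z)
    (hltinv : LeftInvariant lt) (huinv : LeftInvariant u) (hlinv : LeftInvariant l)
    (hsce : IsSCExt lt u l)
    (H : Subgroup G) [H.Normal]
    (g f k : G)
    (hmem : (g : G ⧸ H) ∈
      BSet (QRel lt H) (QRel u H) (QRel l H) (f : G ⧸ H) (k : G ⧸ H)) :
    ∃ h ∈ H, ∃ h' ∈ H, g * h' ∈ BSet lt u l f (k * h) := by
  suffices ∃ f' k' g' : G, (f' : G ⧸ H) = f ∧ (k' : G ⧸ H) = k ∧ (g' : G ⧸ H) = g ∧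
      g' ∈ BSet lt u l f' k' by
    obtain ⟨f', k', g', hf', hk', hg', hmem'⟩ := this
    exact exists_mem_bSet_of_mk_eq hltinv huinv hlinv hf' hk' hg' hmem'
  rcases hmem with (hgf | hgk) | ⟨hfk, hbtwn⟩
  · exact ⟨g, k, g, hgf, rfl, rfl, .inl (.inl rfl)⟩
  · exact ⟨f, g, g, rfl, hgk, rfl, .inl (.inr rfl)⟩
  · obtain ⟨f', k', hf', hk', hb⟩ :=
      exists_btwn_of_btwn_quotient hirr htrans hltinv huinv hlinv hsce hbtwn
    have hfk' : f' ≠ k' := ne_of_apply_ne _ (hf'.trans_ne (hk' ▸ hfk))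
    exact ⟨f', k', g, hf', hk', rfl, .inr ⟨hfk', hb⟩⟩

/-- If `gH ∈ B_{fH,kH}` (computed in `G ⧸ H`), then `gh' ∈ B_{f,kh}` (computed
in `G`) for some `h, h' ∈ H`. -/
theorem stmt13 {G : Type*} [Group G] (lt u l : G → G → Prop)
    (hirr : ∀ x : G, ¬ lt x x)
    (htrans : ∀ x y z : G, lt x y → lt y z → lt x z)
    (hltinv : LeftInvariant lt) (huinv : LeftInvariant u) (hlinv : LeftInvariant l)
    (hsce : IsSCExt lt u l)
    (H : Subgroup G) [H.Normal]
    (hcc : CompletelyConvex lt u l H)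
    (g f k : G)
    (hmem : (g : G ⧸ H) ∈
      BSet (QRel lt H) (QRel u H) (QRel l H) (f : G ⧸ H) (k : G ⧸ H)) :
    ∃ h ∈ H, ∃ h' ∈ H, g * h' ∈ BSet lt u l f (k * h) :=
  stmt13_general lt u l hirr htrans hltinv huinv hlinv hsce H g f k hmem

end PaperSC
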